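/- arXiv:1309.2759 — 2 statements merged into one kernel-verified Lean document; each statement's English description precedes it below -/
import Mathlib

section
/- For 0 < q < 1 and natural numbers n, m ≥ 2, the q-multiple zeta values z_q(n_1,...,n_k) := (1−q)^{n_1+...+n_k} \bar{z}_q(n_1,...,n_k) satisfy: z_q(n)·z_q(m) = z_q(n,m) + z_q(m,n) + z_q(n+m) − (1−q)( z_q(n,m−1) + z_q(m,n−1) + z_q(n+m−1) ). -/
/-! Multiply out the two series and split the double sum over pairs `(i, j)` into the parts
`i > j`, `i < j` and `i = j`; absolute convergence justifies the rearrangement. The factor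
`q^j` of the smaller index is absorbed by `q^j / (1 - q^j)^m = 1/(1 - q^j)^m - 1/(1 - q^j)^(m-1)`,
which turns the part `i > j` into `z̄_q(n,m) - z̄_q(n,m-1)`, the part `i < j` into
`z̄_q(m,n) - z̄_q(m,n-1)`, and the diagonal into `z̄_q(n+m) - z̄_q(n+m-1)`. -/

/-- Modified qMZV of length one: `z̄_q(n) = ∑_{m>0} qᵐ/(1−qᵐ)ⁿ`. -/
noncomputable def zbar1 (q : ℝ) (n : ℕ) : ℝ := ∑' m : ℕ, q ^ (m + 1) / (1 - q ^ (m + 1)) ^ n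

/-- Modified qMZV of length two. -/
noncomputable def zbar2 (q : ℝ) (a b : ℕ) : ℝ :=
  ∑' p : ℕ × ℕ, if p.2 < p.1 ∧ 0 < p.2 then
    q ^ p.1 / ((1 - q ^ p.1) ^ a * (1 - q ^ p.2) ^ b) else 0

/-- The qMZV `z_q(n) = (1−q)ⁿ z̄_q(n)`. -/
noncomputable def zq1 (q : ℝ) (n : ℕ) : ℝ := (1 - q) ^ n * zbar1 q n

/-- The qMZV `z_q(a,b) = (1−q)^{a+b} z̄_q(a,b)`. -/
noncomputable def zq2 (q : ℝ) (a b : ℕ) : ℝ := (1 - q) ^ (a + b) * zbar2 q a b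

open Function

theorem tsum_mul_tsum_eq_tsum_lt_add_tsum_lt_add_tsum_mul {R : Type*} [NormedCommRing R]
    [CompleteSpace R] {f g : ℕ → R} (hf : Summable fun i => ‖f i‖)
    (hg : Summable fun j => ‖g j‖) :
    (∑' i, f i) * ∑' j, g j =
      (∑' p : ℕ × ℕ, if p.2 < p.1 then f p.1 * g p.2 else 0) +
      (∑' p : ℕ × ℕ, if p.2 < p.1 then g p.1 * f p.2 else 0) + ∑' i, f i * g i := by
  have restrict : ∀ (r : ℕ × ℕ → Prop) [DecidablePred r],
      Summable fun p : ℕ × ℕ => if r p then f p.1 * g p.2 else 0 := fun r _ =>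
    (hf.mul_norm hg).of_norm_bounded fun p => by split_ifs <;> simp
  have upper : (∑' p : ℕ × ℕ, if p.2 < p.1 then g p.1 * f p.2 else 0) =
      ∑' p : ℕ × ℕ, if p.1 < p.2 then f p.1 * g p.2 else 0 := by
    rw [← (Equiv.prodComm ℕ ℕ).tsum_eq]
    exact tsum_congr fun p => by simp [mul_comm]
  have diag : (∑' i, f i * g i) = ∑' p : ℕ × ℕ, if p.1 = p.2 then f p.1 * g p.2 else 0 := by
    have hsupp : support (fun p : ℕ × ℕ => if p.1 = p.2 then f p.1 * g p.2 else 0) ⊆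
        Set.range fun i => (i, i) := by
      rintro ⟨i, j⟩ h
      simp only [mem_support, ne_eq, ite_eq_right_iff, not_forall] at h
      exact ⟨i, by simp [h.1]⟩
    rw [← Injective.tsum_eq (fun i j h => congrArg Prod.fst h) hsupp]
    simp
  rw [tsum_mul_tsum_of_summable_norm hf hg, upper, diag,
    ← (restrict (fun p => p.2 < p.1)).tsum_add (restrict (fun p => p.1 < p.2)),
    ← ((restrict _).add (restrict _)).tsum_add (restrict (fun p => p.1 = p.2))]
  refine tsum_congr fun p => ?_
  rcases lt_trichotomy p.1 p.2 with h | h | h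
  · simp [h, h.not_gt, h.ne]
  · simp [h]
  · simp [h, h.not_gt, h.ne']

theorem tsum_ite_lt_succ {M : Type*} [AddCommMonoid M] [TopologicalSpace M] (F : ℕ → ℕ → M) :
    (∑' p : ℕ × ℕ, if p.2 < p.1 then F (p.1 + 1) (p.2 + 1) else 0) =
      ∑' p : ℕ × ℕ, if p.2 < p.1 ∧ 0 < p.2 then F p.1 p.2 else 0 := by
  have hsupp : support (fun p : ℕ × ℕ => if p.2 < p.1 ∧ 0 < p.2 then F p.1 p.2 else 0) ⊆
      Set.range fun p : ℕ × ℕ => (p.1 + 1, p.2 + 1) := by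
    rintro ⟨i, j⟩ h
    simp only [mem_support, ne_eq, ite_eq_right_iff, not_forall] at h
    obtain ⟨⟨hji, hj⟩, -⟩ := h
    exact ⟨(i - 1, j - 1), Prod.ext (Nat.sub_add_cancel (hj.trans hji)) (Nat.sub_add_cancel hj)⟩
  have hinj : Injective fun p : ℕ × ℕ => (p.1 + 1, p.2 + 1) := fun p p' h => by
    simpa [Prod.ext_iff] using h
  rw [← hinj.tsum_eq hsupp]
  simp

theorem div_one_sub_pow_succ {K : Type*} [Field K] {x : K} (hx : 1 - x ≠ 0) (m : ℕ) :
    x / (1 - x) ^ (m + 1) = 1 / (1 - x) ^ (m + 1) - 1 / (1 - x) ^ m := by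
  field_simp
  ring

noncomputable def zbar1Term (q : ℝ) (n i : ℕ) : ℝ := q ^ (i + 1) / (1 - q ^ (i + 1)) ^ n

noncomputable def zbar2Term (q : ℝ) (a b : ℕ) (p : ℕ × ℕ) : ℝ :=
  if p.2 < p.1 ∧ 0 < p.2 then q ^ p.1 / ((1 - q ^ p.1) ^ a * (1 - q ^ p.2) ^ b) else 0

theorem zbar1_eq_tsum (q : ℝ) (n : ℕ) : zbar1 q n = ∑' i, zbar1Term q n i := rfl

theorem zbar2_eq_tsum (q : ℝ) (a b : ℕ) : zbar2 q a b = ∑' p, zbar2Term q a b p := rfl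

section

variable {q : ℝ}

theorem one_sub_pow_pos (hq0 : 0 ≤ q) (hq1 : q < 1) {k : ℕ} (hk : k ≠ 0) : 0 < 1 - q ^ k :=
  sub_pos.2 (pow_lt_one₀ hq0 hq1 hk)

theorem one_sub_le_one_sub_pow (hq0 : 0 ≤ q) (hq1 : q ≤ 1) {k : ℕ} (hk : k ≠ 0) :
    1 - q ≤ 1 - q ^ k :=
  sub_le_sub_left (pow_le_of_le_one hq0 hq1 hk) 1

theorem zbar1Term_nonneg (hq0 : 0 ≤ q) (hq1 : q < 1) (n i : ℕ) : 0 ≤ zbar1Term q n i := by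
  have := one_sub_pow_pos hq0 hq1 i.succ_ne_zero
  unfold zbar1Term
  positivity

theorem summable_zbar1Term (hq0 : 0 ≤ q) (hq1 : q < 1) (n : ℕ) : Summable (zbar1Term q n) := by
  refine .of_nonneg_of_le (zbar1Term_nonneg hq0 hq1 n) (fun i => ?_)
    ((summable_geometric_of_lt_one hq0 hq1).mul_left (q / (1 - q) ^ n))
  have h1q : 0 < 1 - q := sub_pos.2 hq1
  calc zbar1Term q n i ≤ q ^ (i + 1) / (1 - q) ^ n :=
        div_le_div_of_nonneg_left (by positivity) (by positivity) <|
          pow_le_pow_left₀ h1q.le (one_sub_le_one_sub_pow hq0 hq1.le i.succ_ne_zero) n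
    _ = q / (1 - q) ^ n * q ^ i := by ring

theorem zbar2Term_nonneg (hq0 : 0 ≤ q) (hq1 : q < 1) (a b : ℕ) (p : ℕ × ℕ) :
    0 ≤ zbar2Term q a b p := by
  unfold zbar2Term
  split_ifs with h
  · have := one_sub_pow_pos hq0 hq1 (h.2.trans h.1).ne'
    have := one_sub_pow_pos hq0 hq1 h.2.ne'
    positivity
  · rfl

theorem summable_ite_lt_pow (hq0 : 0 ≤ q) (hq1 : q < 1) :
    Summable fun p : ℕ × ℕ => if p.2 < p.1 then q ^ p.1 else 0 := by
  rw [summable_prod_of_nonneg fun p => by positivity]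
  have row : ∀ i : ℕ, (∑' j : ℕ, if j < i then q ^ i else 0) = i * q ^ i := by
    intro i
    rw [tsum_eq_sum (s := Finset.range i) (fun j hj => by simp_all),
      Finset.sum_ite_of_true fun j hj => Finset.mem_range.1 hj]
    simp
  refine ⟨fun i => summable_of_ne_finset_zero (s := Finset.range i) fun j hj => by simp_all, ?_⟩
  simpa [row] using summable_pow_mul_geometric_of_norm_lt_one 1 (r := q)
    (by rwa [Real.norm_of_nonneg hq0])

theorem summable_zbar2Term (hq0 : 0 ≤ q) (hq1 : q < 1) (a b : ℕ) :
    Summable (zbar2Term q a b) := by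
  refine .of_nonneg_of_le (zbar2Term_nonneg hq0 hq1 a b) (fun p => ?_)
    ((summable_ite_lt_pow hq0 hq1).mul_left ((1 - q) ^ (a + b))⁻¹)
  unfold zbar2Term
  split_ifs with h h'
  · have h1q : 0 < 1 - q := sub_pos.2 hq1
    have hbound : (1 - q) ^ (a + b) ≤ (1 - q ^ p.1) ^ a * (1 - q ^ p.2) ^ b := by
      have h1 := one_sub_le_one_sub_pow hq0 hq1.le (h.2.trans h.1).ne'
      have h2 := one_sub_le_one_sub_pow hq0 hq1.le h.2.ne'
      rw [pow_add]
      exact mul_le_mul (pow_le_pow_left₀ h1q.le h1 a) (pow_le_pow_left₀ h1q.le h2 b)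
        (by positivity) (pow_nonneg (h1q.le.trans h1) a)
    rw [inv_mul_eq_div]
    exact div_le_div_of_nonneg_left (by positivity) (by positivity) hbound
  · exact absurd h.1 h'
  · positivity
  · simp

theorem tsum_lt_zbar1Term_mul (hq0 : 0 ≤ q) (hq1 : q < 1) (n m : ℕ) :
    (∑' p : ℕ × ℕ, if p.2 < p.1 then zbar1Term q n p.1 * zbar1Term q (m + 1) p.2 else 0) =
      zbar2 q n (m + 1) - zbar2 q n m := by
  calc _ = ∑' p : ℕ × ℕ, if p.2 < p.1 ∧ 0 < p.2 then
          q ^ p.1 / (1 - q ^ p.1) ^ n * (q ^ p.2 / (1 - q ^ p.2) ^ (m + 1)) else 0 :=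
        tsum_ite_lt_succ fun k l => q ^ k / (1 - q ^ k) ^ n * (q ^ l / (1 - q ^ l) ^ (m + 1))
    _ = ∑' p, (zbar2Term q n (m + 1) p - zbar2Term q n m p) := by
        refine tsum_congr fun p => ?_
        unfold zbar2Term
        split_ifs with h
        · rw [div_one_sub_pow_succ (one_sub_pow_pos hq0 hq1 h.2.ne').ne']
          generalize 1 - q ^ p.2 = y
          ring
        · simp
    _ = _ := by
        rw [zbar2_eq_tsum, zbar2_eq_tsum]
        exact (summable_zbar2Term hq0 hq1 n (m + 1)).tsum_sub (summable_zbar2Term hq0 hq1 n m)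

theorem tsum_zbar1Term_mul_self (hq0 : 0 ≤ q) (hq1 : q < 1) (n m : ℕ) :
    ∑' i, zbar1Term q n i * zbar1Term q (m + 1) i = zbar1 q (n + m + 1) - zbar1 q (n + m) := by
  rw [zbar1_eq_tsum, zbar1_eq_tsum,
    ← (summable_zbar1Term hq0 hq1 _).tsum_sub (summable_zbar1Term hq0 hq1 _)]
  refine tsum_congr fun i => ?_
  unfold zbar1Term
  rw [div_one_sub_pow_succ (one_sub_pow_pos hq0 hq1 i.succ_ne_zero).ne']
  generalize 1 - q ^ (i + 1) = y
  ring

theorem zbar1_mul_zbar1 (hq0 : 0 ≤ q) (hq1 : q < 1) {n m : ℕ} (hn : n ≠ 0) (hm : m ≠ 0) :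
    zbar1 q n * zbar1 q m =
      zbar2 q n m - zbar2 q n (m - 1) + (zbar2 q m n - zbar2 q m (n - 1)) +
        (zbar1 q (n + m) - zbar1 q (n + m - 1)) := by
  obtain ⟨a, rfl⟩ : ∃ a, n = a + 1 := ⟨n - 1, by omega⟩
  obtain ⟨b, rfl⟩ : ∃ b, m = b + 1 := ⟨m - 1, by omega⟩
  have hsumm : ∀ k, Summable fun i => ‖zbar1Term q k i‖ := fun k =>
    summable_norm_iff.2 (summable_zbar1Term hq0 hq1 k)
  rw [zbar1_eq_tsum, zbar1_eq_tsum,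
    tsum_mul_tsum_eq_tsum_lt_add_tsum_lt_add_tsum_mul (hsumm _) (hsumm _),
    tsum_lt_zbar1Term_mul hq0 hq1 (a + 1) b, tsum_lt_zbar1Term_mul hq0 hq1 (b + 1) a,
    tsum_zbar1Term_mul_self hq0 hq1 (a + 1) b, Nat.add_one_sub_one, Nat.add_one_sub_one,
    show a + 1 + (b + 1) - 1 = a + 1 + b by omega]
  rfl

end

/-- Quasi-shuffle identity for the qMZVs `z_q`. -/
theorem zq_quasi_shuffle (q : ℝ) (hq0 : 0 < q) (hq1 : q < 1) (n m : ℕ)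
    (hn : 2 ≤ n) (hm : 2 ≤ m) :
    zq1 q n * zq1 q m =
      zq2 q n m + zq2 q m n + zq1 q (n + m)
        - (1 - q) * (zq2 q n (m - 1) + zq2 q m (n - 1) + zq1 q (n + m - 1)) := by
  obtain ⟨a, rfl⟩ : ∃ a, n = a + 1 := ⟨n - 1, by omega⟩
  obtain ⟨b, rfl⟩ : ∃ b, m = b + 1 := ⟨m - 1, by omega⟩
  have hprod := zbar1_mul_zbar1 hq0.le hq1 a.succ_ne_zero b.succ_ne_zero
  simp only [Nat.add_one_sub_one, show a + 1 + (b + 1) - 1 = a + 1 + b by omega] at hprod ⊢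
  simp only [zq1, zq2]
  linear_combination (1 - q) ^ (a + 1 + (b + 1)) * hprod
end

section
/- For q > 1 and k ≥ 1 natural numbers n_1,...,n_k with each n_i ≥ 2 and w = n_1+...+n_k, the modified q-MZVs satisfy: \bar{ζ}_q(n_1,...,n_k) = (−1)^w \bar{z}_{q^{−1}}(n_1,...,n_k) + \sum_{j=1}^{k−1} \sum_{l_2+...+l_k=j, l_i ∈ {0,1}} (−1)^{w−j} \bar{z}_{q^{−1}}(n_1, n_2−l_2, ..., n_k−l_k). -/
/-!
With `p = q⁻¹` one has `1 - q^m = -q^m (1 - p^m)`, so every summand of `ζ̄_q(n)` equals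
`(-1)^w ∏ᵢ p^{mᵢ} / (1 - p^{mᵢ})^{nᵢ}`. For every index but the first, write
`p^{mᵢ} / (1 - p^{mᵢ})^{nᵢ} = 1 / (1 - p^{mᵢ})^{nᵢ} - 1 / (1 - p^{mᵢ})^{nᵢ - 1}` and expand the
product: the term indexed by `(l₂, …, l_k) ∈ {0,1}^{k-1}` is `(-1)^{w - Σ lᵢ}` times a summand of
`z̄_p(n₁, n₂ - l₂, …)`. These series converge absolutely for `0 ≤ p < 1` (the numerator `p^{m₁}`
is at most `(p^{1/k})^{Σ mᵢ}` on decreasing tuples), so the finite expansion commutes with the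
sum over `m`; grouping the terms by `j = Σ lᵢ` gives the formula.
-/

open scoped Classical

/-- The modified qMZV `z̄_p(n₁,…,n_k) = ∑_{m₁>⋯>m_k>0} p^{m₁} / ∏ᵢ(1−p^{mᵢ})^{nᵢ}`,
for tuples indexed by `Fin (k+1)` (length `k+1 ≥ 1`). -/
noncomputable def zbarGen {k : ℕ} (p : ℝ) (n : Fin (k + 1) → ℕ) : ℝ :=
  ∑' m : Fin (k + 1) → ℕ,
    if (∀ i j : Fin (k + 1), i < j → m j < m i) ∧ (∀ i, 0 < m i) then
      p ^ m 0 / ∏ i, (1 - p ^ m i) ^ n i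
    else 0

/-- Bradley's modified qMZV
`ζ̄_q(n₁,…,n_k) = ∑_{m₁>⋯>m_k>0} q^{∑(nᵢ−1)mᵢ} / ∏ᵢ(1−q^{mᵢ})^{nᵢ}`. -/
noncomputable def zetaBarGen {k : ℕ} (q : ℝ) (n : Fin (k + 1) → ℕ) : ℝ :=
  ∑' m : Fin (k + 1) → ℕ,
    if (∀ i j : Fin (k + 1), i < j → m j < m i) ∧ (∀ i, 0 < m i) then
      q ^ (∑ i, (n i - 1) * m i) / ∏ i, (1 - q ^ m i) ^ n i
    else 0

open Finset

theorem neg_one_pow_sub_of_le {R : Type*} [Monoid R] [HasDistribNeg R] {w j : ℕ} (h : j ≤ w) :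
    (-1 : R) ^ (w - j) = (-1) ^ w * (-1) ^ j := by
  obtain ⟨d, rfl⟩ := Nat.exists_eq_add_of_le h
  rw [Nat.add_sub_cancel_left, pow_add, ((Commute.neg_one_left _).pow_left j).eq, mul_assoc,
    ← pow_add, Even.neg_one_pow ⟨j, rfl⟩, mul_one]

section Algebra

variable {K : Type*} [Field K]

theorem pow_pred_mul_div_one_sub_pow_pow {q : K} (hq : q ≠ 0) (m : ℕ) {n : ℕ} (hn : 1 ≤ n) :
    q ^ ((n - 1) * m) / (1 - q ^ m) ^ n = (-1) ^ n * (q⁻¹ ^ m / (1 - q⁻¹ ^ m) ^ n) := by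
  obtain ⟨n, rfl⟩ := Nat.exists_eq_add_of_le' hn
  have h : 1 - q ^ m = -q ^ m * (1 - q⁻¹ ^ m) := by
    rw [inv_pow]; field_simp; ring
  rw [h, mul_pow, neg_pow, Nat.add_sub_cancel, mul_comm n m, pow_mul, inv_pow, pow_succ (q ^ m)]
  field_simp
  rw [← pow_mul, Even.neg_one_pow ⟨n + 1, by ring⟩]

theorem one_sub_div_pow_eq_sum {t : K} (ht : t ≠ 0) {e : ℕ} (he : 1 ≤ e) :
    (1 - t) / t ^ e = ∑ j : Fin 2, (-1) ^ (j : ℕ) / t ^ (e - j) := by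
  obtain ⟨e, rfl⟩ := Nat.exists_eq_add_of_le' he
  rw [Fin.sum_univ_two]
  simp only [Fin.val_zero, Fin.val_one, Nat.add_sub_cancel, pow_zero, pow_one, Nat.sub_zero]
  field_simp
  ring

theorem prod_one_sub_div_pow_eq_sum {ι : Type*} [Fintype ι] [DecidableEq ι] {t : ι → K}
    (ht : ∀ i, t i ≠ 0) {e : ι → ℕ} (he : ∀ i, 1 ≤ e i) :
    ∏ i, (1 - t i) / t i ^ e i
      = ∑ l : ι → Fin 2, (-1) ^ (∑ i, (l i : ℕ)) / ∏ i, t i ^ (e i - l i) := by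
  simp_rw [one_sub_div_pow_eq_sum (ht _) (he _), Fintype.prod_sum, prod_div_distrib,
    prod_pow_eq_pow_sum]

theorem pow_sum_div_prod_one_sub_pow {ι : Type*} [Fintype ι] {q : K} (hq : q ≠ 0)
    (m : ι → ℕ) {n : ι → ℕ} (hn : ∀ i, 1 ≤ n i) :
    q ^ (∑ i, (n i - 1) * m i) / ∏ i, (1 - q ^ m i) ^ n i
      = (-1) ^ (∑ i, n i) * ∏ i, q⁻¹ ^ m i / (1 - q⁻¹ ^ m i) ^ n i := by
  rw [← prod_pow_eq_pow_sum, ← prod_pow_eq_pow_sum, ← prod_div_distrib, ← prod_mul_distrib]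
  exact prod_congr rfl fun i _ => pow_pred_mul_div_one_sub_pow_pow hq (m i) (hn i)

end Algebra

theorem sum_filter_apply_zero_eq_sum_cons {α M : Type*} [Fintype α] [DecidableEq α]
    [AddCommMonoid M] {k : ℕ} (a : α) (F : (Fin (k + 1) → α) → M) :
    ∑ l ∈ univ.filter (fun l : Fin (k + 1) → α => l 0 = a), F l
      = ∑ l : Fin k → α, F (Fin.cons a l) := by
  refine sum_bij' (fun l _ => Fin.tail l) (fun l _ => Fin.cons a l) (by simp) (by simp)
    (fun l hl => ?_) (fun l _ => Fin.tail_cons _ _) (fun l hl => ?_)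
  · rw [(mem_filter.mp hl).2.symm, Fin.cons_self_tail]
  · rw [(mem_filter.mp hl).2.symm, Fin.cons_self_tail]

theorem sum_val_le_of_apply_zero_eq_zero {k : ℕ} {l : Fin (k + 1) → Fin 2} (hl : l 0 = 0) :
    ∑ i, (l i : ℕ) ≤ k := by
  calc ∑ i, (l i : ℕ) = ∑ i : Fin k, (l i.succ : ℕ) := by simp [Fin.sum_univ_succ, hl]
    _ ≤ ∑ _i : Fin k, 1 := sum_le_sum fun i _ => Nat.lt_succ_iff.mp (l i.succ).isLt
    _ = k := by simp

theorem sum_filter_apply_zero_eq_fiberwise {M : Type*} [AddCommMonoid M] {k : ℕ}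
    (F : ℕ → (Fin (k + 1) → Fin 2) → M) :
    ∑ l ∈ univ.filter (fun l : Fin (k + 1) → Fin 2 => l 0 = 0), F (∑ i, (l i : ℕ)) l
      = F 0 0 + ∑ j ∈ Icc 1 k,
          ∑ l ∈ univ.filter (fun l : Fin (k + 1) → Fin 2 => l 0 = 0 ∧ ∑ i, (l i : ℕ) = j),
            F j l := by
  have hfiber (j : ℕ) : (univ.filter fun l : Fin (k + 1) → Fin 2 => l 0 = 0).filter
      (fun l => ∑ i, (l i : ℕ) = j) = univ.filter (fun l => l 0 = 0 ∧ ∑ i, (l i : ℕ) = j) :=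
    filter_filter _ _ _
  have hzero : univ.filter (fun l : Fin (k + 1) → Fin 2 => l 0 = 0 ∧ ∑ i, (l i : ℕ) = 0)
      = {0} := by
    ext l
    simp only [mem_filter, mem_univ, true_and, mem_singleton]
    constructor
    · rintro ⟨-, hsum⟩
      funext i
      exact Fin.ext (sum_eq_zero_iff.mp hsum i (mem_univ i))
    · rintro rfl
      simp
  rw [← sum_fiberwise_of_maps_to (t := Icc 0 k) (g := fun l => ∑ i, (l i : ℕ))
    fun l hl => mem_Icc.mpr
      ⟨Nat.zero_le _, sum_val_le_of_apply_zero_eq_zero (mem_filter.mp hl).2⟩,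
    ← add_sum_Ioc_eq_sum_Icc (Nat.zero_le k), ← Finset.Icc_add_one_left_eq_Ioc, zero_add]
  simp_rw [hfiber, hzero]
  refine congrArg₂ _ (by simp) (sum_congr rfl fun j _ => sum_congr rfl fun l hl => ?_)
  rw [(mem_filter.mp hl).2.2]

theorem summable_pow_sum_pi {s : ℝ} (hs₀ : 0 ≤ s) (hs₁ : s < 1) (k : ℕ) :
    Summable (fun m : Fin k → ℕ => s ^ ∑ i, m i) := by
  induction k with
  | zero => exact .of_finite
  | succ k ih =>
    refine (Equiv.summable_iff (Fin.consEquiv fun _ => ℕ)).mp ?_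
    refine ((summable_geometric_of_lt_one hs₀ hs₁).mul_of_nonneg ih (fun _ => by positivity)
      (fun _ => by positivity)).congr fun x => ?_
    simp [Fin.consEquiv, Fin.sum_cons, pow_add]

theorem pow_mul_apply_zero_le_pow_sum {s : ℝ} (hs₀ : 0 ≤ s) (hs₁ : s ≤ 1) {k : ℕ}
    {m : Fin (k + 1) → ℕ} (hm : ∀ i, m i ≤ m 0) :
    (s ^ (k + 1)) ^ m 0 ≤ s ^ ∑ i, m i := by
  rw [← pow_mul]
  refine pow_le_pow_of_le_one hs₀ hs₁ ?_
  calc ∑ i, m i ≤ ∑ _i : Fin (k + 1), m 0 := sum_le_sum fun i _ => hm i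
    _ = (k + 1) * m 0 := by simp

theorem one_sub_pow_sum_le_prod_one_sub_pow {ι : Type*} [Fintype ι] {p : ℝ} (hp₀ : 0 ≤ p)
    (hp₁ : p ≤ 1) {m : ι → ℕ} (hm : ∀ i, 0 < m i) (e : ι → ℕ) :
    (1 - p) ^ ∑ i, e i ≤ ∏ i, (1 - p ^ m i) ^ e i := by
  rw [← prod_pow_eq_pow_sum]
  refine prod_le_prod (fun i _ => pow_nonneg (sub_nonneg.mpr hp₁) _) fun i _ => ?_
  exact pow_le_pow_left₀ (sub_nonneg.mpr hp₁)
    (sub_le_sub_left (pow_le_of_le_one hp₀ hp₁ (hm i).ne') _) _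

noncomputable def zbarTerm {k : ℕ} (p : ℝ) (n m : Fin (k + 1) → ℕ) : ℝ :=
  if (∀ i j : Fin (k + 1), i < j → m j < m i) ∧ (∀ i, 0 < m i) then
    p ^ m 0 / ∏ i, (1 - p ^ m i) ^ n i
  else 0

noncomputable def zetaBarTerm {k : ℕ} (q : ℝ) (n m : Fin (k + 1) → ℕ) : ℝ :=
  if (∀ i j : Fin (k + 1), i < j → m j < m i) ∧ (∀ i, 0 < m i) then
    q ^ (∑ i, (n i - 1) * m i) / ∏ i, (1 - q ^ m i) ^ n i
  else 0

theorem zetaBarGen_eq_tsum {k : ℕ} (q : ℝ) (n : Fin (k + 1) → ℕ) :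
    zetaBarGen q n = ∑' m, zetaBarTerm q n m := rfl

section Summability

variable {k : ℕ} {p : ℝ}

theorem zbarTerm_nonneg (hp₀ : 0 ≤ p) (hp₁ : p ≤ 1) (e m : Fin (k + 1) → ℕ) :
    0 ≤ zbarTerm p e m := by
  unfold zbarTerm
  split_ifs
  · exact div_nonneg (pow_nonneg hp₀ _)
      (prod_nonneg fun i _ => pow_nonneg (sub_nonneg.mpr (pow_le_one₀ hp₀ hp₁)) _)
  · exact le_rfl

theorem zbarTerm_le (hp₀ : 0 ≤ p) (hp₁ : p < 1) {s : ℝ} (hs₀ : 0 ≤ s) (hs₁ : s ≤ 1)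
    (hs : s ^ (k + 1) = p) (e m : Fin (k + 1) → ℕ) :
    zbarTerm p e m ≤ s ^ (∑ i, m i) / (1 - p) ^ ∑ i, e i := by
  unfold zbarTerm
  split_ifs with hm
  · have hm0 (i : Fin (k + 1)) : m i ≤ m 0 := by
      rcases (Fin.zero_le i).eq_or_lt with rfl | hi
      · exact le_rfl
      · exact (hm.1 0 i hi).le
    refine div_le_div₀ (by positivity) ?_ (pow_pos (sub_pos.mpr hp₁) _)
      (one_sub_pow_sum_le_prod_one_sub_pow hp₀ hp₁.le hm.2 e)
    exact hs ▸ pow_mul_apply_zero_le_pow_sum hs₀ hs₁ hm0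
  · have : 0 < 1 - p := sub_pos.mpr hp₁
    positivity

theorem summable_zbarTerm (hp₀ : 0 ≤ p) (hp₁ : p < 1) (e : Fin (k + 1) → ℕ) :
    Summable (zbarTerm p e) := by
  set s := p ^ ((k + 1 : ℕ) : ℝ)⁻¹
  have hs : s ^ (k + 1) = p := Real.rpow_inv_natCast_pow hp₀ k.succ_ne_zero
  have hs₀ : 0 ≤ s := Real.rpow_nonneg hp₀ _
  have hs₁ : s < 1 := Real.rpow_lt_one hp₀ hp₁ (by positivity)
  exact ((summable_pow_sum_pi hs₀ hs₁ _).div_const _).of_nonneg_of_le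
    (zbarTerm_nonneg hp₀ hp₁.le e) (zbarTerm_le hp₀ hp₁ hs₀ hs₁.le hs e)

end Summability

section Decomposition

variable {k : ℕ} {q : ℝ} {n : Fin (k + 1) → ℕ}

theorem sum_val_le_sum_of_one_le (hn : ∀ i, 1 ≤ n i) (l : Fin (k + 1) → Fin 2) :
    ∑ i, (l i : ℕ) ≤ ∑ i, n i :=
  sum_le_sum fun i _ => (Nat.lt_succ_iff.mp (l i).isLt).trans (hn i)

theorem pow_sum_div_prod_one_sub_pow_eq_sum (hq : 1 < q) (hn : ∀ i, 1 ≤ n i)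
    {m : Fin (k + 1) → ℕ} (hm : ∀ i, 0 < m i) :
    q ^ (∑ i, (n i - 1) * m i) / ∏ i, (1 - q ^ m i) ^ n i
      = ∑ l ∈ univ.filter (fun l : Fin (k + 1) → Fin 2 => l 0 = 0),
          (-1) ^ (∑ i, n i - ∑ i, (l i : ℕ))
            * (q⁻¹ ^ m 0 / ∏ i, (1 - q⁻¹ ^ m i) ^ (n i - l i)) := by
  have hp₀ : 0 < q⁻¹ := inv_pos.mpr (zero_lt_one.trans hq)
  have hp₁ : q⁻¹ < 1 := inv_lt_one_of_one_lt₀ hq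
  have ht (i : Fin (k + 1)) : 1 - q⁻¹ ^ m i ≠ 0 :=
    (sub_pos.mpr (pow_lt_one₀ hp₀.le hp₁ (hm i).ne')).ne'
  have hsucc : ∏ i : Fin k, q⁻¹ ^ m i.succ / (1 - q⁻¹ ^ m i.succ) ^ n i.succ
      = ∏ i : Fin k, (1 - (1 - q⁻¹ ^ m i.succ)) / (1 - q⁻¹ ^ m i.succ) ^ n i.succ := by
    simp only [sub_sub_cancel]
  rw [pow_sum_div_prod_one_sub_pow (zero_lt_one.trans hq).ne' m hn, Fin.prod_univ_succ, hsucc,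
    prod_one_sub_div_pow_eq_sum (t := fun i : Fin k => 1 - q⁻¹ ^ m i.succ) (fun i => ht i.succ)
      (fun i => hn i.succ),
    sum_filter_apply_zero_eq_sum_cons, mul_sum, mul_sum]
  refine sum_congr rfl fun l _ => ?_
  have hl : ∑ i, ((Fin.cons (α := fun _ => Fin 2) 0 l i : Fin 2) : ℕ) = ∑ i, (l i : ℕ) := by
    simp [Fin.sum_univ_succ]
  rw [neg_one_pow_sub_of_le (sum_val_le_sum_of_one_le hn _), hl, Fin.prod_univ_succ]
  simp only [Fin.cons_zero, Fin.cons_succ, Fin.val_zero, Nat.sub_zero]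
  field_simp

theorem zetaBarTerm_eq_sum (hq : 1 < q) (hn : ∀ i, 1 ≤ n i) (m : Fin (k + 1) → ℕ) :
    zetaBarTerm q n m
      = ∑ l ∈ univ.filter (fun l : Fin (k + 1) → Fin 2 => l 0 = 0),
          (-1) ^ (∑ i, n i - ∑ i, (l i : ℕ)) * zbarTerm q⁻¹ (fun i => n i - l i) m := by
  by_cases hm : (∀ i j : Fin (k + 1), i < j → m j < m i) ∧ (∀ i, 0 < m i)
  · simp only [zetaBarTerm, zbarTerm, if_pos hm]
    exact pow_sum_div_prod_one_sub_pow_eq_sum hq hn hm.2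
  · simp only [zetaBarTerm, zbarTerm, if_neg hm, mul_zero, sum_const_zero]

theorem zetaBarGen_eq_sum (hq : 1 < q) (hn : ∀ i, 1 ≤ n i) :
    zetaBarGen q n
      = ∑ l ∈ univ.filter (fun l : Fin (k + 1) → Fin 2 => l 0 = 0),
          (-1) ^ (∑ i, n i - ∑ i, (l i : ℕ)) * zbarGen q⁻¹ (fun i => n i - l i) := by
  have hp₀ : 0 ≤ q⁻¹ := inv_nonneg.mpr (zero_le_one.trans hq.le)
  have hp₁ : q⁻¹ < 1 := inv_lt_one_of_one_lt₀ hq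
  rw [zetaBarGen_eq_tsum, tsum_congr (zetaBarTerm_eq_sum hq hn),
    Summable.tsum_finsetSum fun l _ => (summable_zbarTerm hp₀ hp₁ _).mul_left _]
  exact sum_congr rfl fun l _ => (summable_zbarTerm hp₀ hp₁ _).tsum_mul_left _

end Decomposition

/-- For `q > 1` and all entries `nᵢ ≥ 2`, with `w = ∑ nᵢ`:
`ζ̄_q(n) = (−1)^w z̄_{q⁻¹}(n) + ∑_{j=1}^{k−1} ∑_{l₂+⋯+l_k=j, lᵢ∈{0,1}}
(−1)^{w−j} z̄_{q⁻¹}(n₁, n₂−l₂, …, n_k−l_k)`. -/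
theorem zetaBar_decomposition (q : ℝ) (hq : 1 < q) (k : ℕ) (n : Fin (k + 1) → ℕ)
    (hn : ∀ i, 2 ≤ n i) :
    zetaBarGen q n =
      (-1 : ℝ) ^ (∑ i, n i) * zbarGen q⁻¹ n
        + ∑ j ∈ Finset.Icc 1 k,
            ∑ l ∈ Finset.univ.filter
                (fun l : Fin (k + 1) → Fin 2 => l 0 = 0 ∧ (∑ i, (l i : ℕ)) = j),
              (-1 : ℝ) ^ ((∑ i, n i) - j) * zbarGen q⁻¹ (fun i => n i - (l i : ℕ)) := by
  rw [zetaBarGen_eq_sum hq fun i => one_le_two.trans (hn i),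
    sum_filter_apply_zero_eq_fiberwise
      (fun j l => (-1 : ℝ) ^ (∑ i, n i - j) * zbarGen q⁻¹ (fun i => n i - l i))]
  simp
end
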